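/- arXiv:2004.11830 — 3 statements merged into one kernel-verified Lean document; each statement's English description precedes it below -/
import Mathlib

section
/- For all r, s > 0, the integral over z ∈ (-∞,0) of K₀(r,z)·K₀(s,z) equals 1/(√(4π)·(r+s)^{3/2}), where K₀(t,z) = 2∂_z H(t,z) = -(z/t)·H(t,z). -/
noncomputable def H (t z : ℝ) : ℝ := (4 * Real.pi * t) ^ (-(1:ℝ)/2) * Real.exp (-z^2 / (4*t))

noncomputable def K₀ (t z : ℝ) : ℝ := -(z / t) * H t z

/-! The product `K₀ r z * K₀ s z` is `z² e^{-a z²} / (4π rs √(rs))` with `a = (r+s)/(4rs)`, and the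
half-line Gaussian moment `∫_{-∞}^0 z² e^{-a z²} dz = √π / (4 a^{3/2})` is a Gamma integral,
with `Γ(3/2) = √π / 2`. -/

open Real Set MeasureTheory

lemma rpow_three_halves_eq_mul_sqrt {x : ℝ} (hx : 0 ≤ x) : x ^ ((3:ℝ)/2) = x * √x := by
  rw [show (3:ℝ)/2 = 1 + 1/2 by norm_num, rpow_add' hx (by norm_num), rpow_one, sqrt_eq_rpow]

lemma H_eq_exp_div_sqrt {t : ℝ} (ht : 0 ≤ t) (z : ℝ) :
    H t z = exp (-z^2 / (4*t)) / √(4*π*t) := by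
  rw [H, neg_div, rpow_neg (by positivity), ← sqrt_eq_rpow, inv_mul_eq_div]

lemma K₀_mul_K₀ {r s : ℝ} (hr : 0 < r) (hs : 0 < s) (z : ℝ) :
    K₀ r z * K₀ s z = z^2 * exp (-((r+s)/(4*r*s)) * z^2) / (4*π*(r*s)*√(r*s)) := by
  have hexp : exp (-z^2 / (4*r)) * exp (-z^2 / (4*s)) = exp (-((r+s)/(4*r*s)) * z^2) := by
    rw [← exp_add]; congr 1; field_simp; ring
  have hsqrt : √(4*π*r) * √(4*π*s) = 4*π*√(r*s) := by
    rw [← sqrt_mul (by positivity), show 4*π*r*(4*π*s) = (4*π)^2*(r*s) by ring,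
      sqrt_mul (by positivity), sqrt_sq (by positivity)]
  rw [K₀, K₀, H_eq_exp_div_sqrt hr.le, H_eq_exp_div_sqrt hs.le]
  calc _ = z^2 * (exp (-z^2 / (4*r)) * exp (-z^2 / (4*s))) / ((r*s) * (√(4*π*r) * √(4*π*s))) := by
          field_simp
    _ = _ := by rw [hexp, hsqrt]; ring

lemma integral_Iio_sq_mul_exp_neg_mul_sq {a : ℝ} (ha : 0 < a) :
    ∫ z in Iio 0, z^2 * exp (-a * z^2) = √π / (4 * a * √a) := by
  have hGamma : Gamma ((2+1)/2) = √π / 2 := by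
    rw [show ((2:ℝ)+1)/2 = 1/2 + 1 by norm_num, Gamma_add_one (by norm_num), Gamma_one_half_eq]
    ring
  calc ∫ z in Iio 0, z^2 * exp (-a * z^2)
      = ∫ z in Ioi 0, z ^ (2:ℝ) * exp (-a * z ^ (2:ℝ)) := by
        rw [← integral_Iic_eq_integral_Iio, ← neg_zero, ← integral_comp_neg_Ioi]
        simp only [neg_zero, neg_sq, rpow_two]
    _ = a ^ (-(2+1)/2 : ℝ) * (1/2) * Gamma ((2+1)/2) :=
        integral_rpow_mul_exp_neg_mul_rpow two_pos (by norm_num) ha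
    _ = √π / (4 * a * √a) := by
        rw [hGamma, show (-(2+1)/2 : ℝ) = -(3/2) by norm_num, rpow_neg ha.le,
          rpow_three_halves_eq_mul_sqrt ha.le]
        field_simp; ring

theorem M_zero_formula :
    ∀ r s : ℝ, 0 < r → 0 < s →
      ∫ z in Set.Iio (0:ℝ), K₀ r z * K₀ s z
        = 1 / (Real.sqrt (4 * Real.pi) * (r + s) ^ ((3:ℝ)/2)) := by
  intro r s hr hs
  simp_rw [K₀_mul_K₀ hr hs]
  have hsqrt_a : √((r+s)/(4*r*s)) = √(r+s) / (2*√(r*s)) := by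
    rw [sqrt_div' _ (by positivity), show 4*r*s = 2^2*(r*s) by ring, sqrt_mul' _ (by positivity),
      sqrt_sq zero_le_two]
  have hsqrt_4π : √(4*π) = 2*√π := by
    rw [sqrt_mul' _ pi_pos.le, show (4:ℝ) = 2^2 by norm_num, sqrt_sq zero_le_two]
  rw [integral_div, integral_Iio_sq_mul_exp_neg_mul_sq (by positivity), hsqrt_a, hsqrt_4π,
    rpow_three_halves_eq_mul_sqrt (by positivity)]
  field_simp
  linear_combination 4 * sq_sqrt pi_pos.le
end

section
/- Let φ : [0,∞) → ℝ be C¹ with φ(0) = 0 and define v(t,z) = ∫_0^t 2 ∂_z H(t-τ, z) φ(τ) dτ for z < 0, t > 0, where H is the one-dimensional heat kernel. Then ∂_z v(t,z) = ∫_0^t 2 H(t-τ, z) φ'(τ) dτ. -/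
noncomputable def v (φ : ℝ → ℝ) (t z : ℝ) : ℝ :=
  ∫ τ in (0:ℝ)..t, 2 * deriv (fun z' => H (t - τ) z') z * φ τ

open Real Set Filter Topology MeasureTheory Asymptotics
open scoped Interval

/- `∂_z H` and `∂_t H = ∂_z² H`. For `s ≤ 0` the real power `(4 π s) ^ (-1/2)` is `0`, so `H s`,
`Hz s` and `Ht s` all vanish identically and the identities below hold for every `s`. -/
noncomputable def Hz (s z : ℝ) : ℝ := -(z / (2 * s)) * H s z

noncomputable def Ht (s z : ℝ) : ℝ := (z ^ 2 / (4 * s ^ 2) - 1 / (2 * s)) * H s z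

lemma Real.exp_neg_le_factorial_div_pow {x : ℝ} (hx : 0 < x) (n : ℕ) :
    exp (-x) ≤ n.factorial / x ^ n := by
  rw [exp_neg, ← inv_div]
  exact inv_anti₀ (by positivity) (pow_div_factorial_le_exp _ hx.le n)

section HeatKernel

variable {s z : ℝ}

lemma H_of_nonpos (hs : s ≤ 0) (z : ℝ) : H s z = 0 := by
  rcases hs.lt_or_eq with hs | rfl
  · have hneg : 4 * π * s < 0 := by nlinarith [pi_pos]
    have hcos : cos (-(1:ℝ) / 2 * π) = 0 := by
      rw [show -(1:ℝ) / 2 * π = -(π / 2) by ring, cos_neg, cos_pi_div_two]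
    simp [H, rpow_def_of_neg hneg, hcos]
  · simp [H]

lemma H_nonneg (s z : ℝ) : 0 ≤ H s z := by
  rcases le_or_gt s 0 with hs | hs
  · rw [H_of_nonpos hs]
  · exact mul_nonneg (rpow_nonneg (by positivity) _) (exp_nonneg _)

lemma Hz_of_nonpos (hs : s ≤ 0) (z : ℝ) : Hz s z = 0 := by
  simp [Hz, H_of_nonpos hs]

lemma Ht_of_nonpos (hs : s ≤ 0) (z : ℝ) : Ht s z = 0 := by
  simp [Ht, H_of_nonpos hs]

lemma H_le_exp_div_sqrt (hs : 0 < s) (z : ℝ) : H s z ≤ exp (-z ^ 2 / (4 * s)) / √s := by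
  have hrpow : (4 * π * s) ^ (-(1:ℝ) / 2) ≤ s ^ (-(1:ℝ) / 2) :=
    rpow_le_rpow_of_nonpos hs (by nlinarith [pi_gt_three]) (by norm_num)
  rw [sqrt_eq_rpow, div_eq_inv_mul, ← rpow_neg hs.le, show -(1 / 2 : ℝ) = -1 / 2 by norm_num]
  exact mul_le_mul_of_nonneg_right hrpow (exp_nonneg _)

lemma H_le_mul_sq {T a : ℝ} (hsT : s ≤ T) (ha : 0 < a) (haz : a ≤ z ^ 2 / 4) :
    H s z ≤ 6 * √T / a ^ 3 * s ^ 2 := by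
  rcases le_or_gt s 0 with hs | hs
  · rw [H_of_nonpos hs]; positivity
  have hexp : exp (-z ^ 2 / (4 * s)) ≤ 6 / (a / s) ^ 3 :=
    calc exp (-z ^ 2 / (4 * s)) ≤ exp (-(a / s)) := by
          gcongr; rw [neg_div, neg_le_neg_iff, ← div_div]; gcongr
      _ ≤ Nat.factorial 3 / (a / s) ^ 3 := exp_neg_le_factorial_div_pow (by positivity) 3
      _ = 6 / (a / s) ^ 3 := by norm_num [Nat.factorial]
  have hsqrt : 0 < √s := sqrt_pos.2 hs
  calc H s z ≤ exp (-z ^ 2 / (4 * s)) / √s := H_le_exp_div_sqrt hs z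
    _ ≤ 6 / (a / s) ^ 3 / √s := by gcongr
    _ = 6 * √s / a ^ 3 * s ^ 2 := by
        field_simp
        rw [sq_sqrt hs.le]
    _ ≤ 6 * √T / a ^ 3 * s ^ 2 := by gcongr

lemma abs_Hz_le {T a : ℝ} (hsT : |s| ≤ T) (ha : 0 < a) (haz : a ≤ z ^ 2 / 4) :
    |Hz s z| ≤ 3 * T * √T / a ^ 3 * |z| := by
  have hT : 0 ≤ T := (abs_nonneg s).trans hsT
  rcases le_or_gt s 0 with hs | hs
  · rw [Hz_of_nonpos hs, abs_zero]; positivity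
  rw [abs_of_pos hs] at hsT
  have hH := H_le_mul_sq hsT ha haz
  calc |Hz s z| = |z| / (2 * s) * H s z := by
        rw [Hz, abs_mul, abs_neg, abs_div, abs_of_pos (by positivity : 0 < 2 * s),
          abs_of_nonneg (H_nonneg s z)]
    _ ≤ |z| / (2 * s) * (6 * √T / a ^ 3 * s ^ 2) := by gcongr
    _ = 3 * s * √T / a ^ 3 * |z| := by field_simp; ring
    _ ≤ 3 * T * √T / a ^ 3 * |z| := by gcongr

lemma abs_Ht_le {T a : ℝ} (hsT : |s| ≤ T) (ha : 0 < a) (haz : a ≤ z ^ 2 / 4) :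
    |Ht s z| ≤ 3 * √T / a ^ 3 * (z ^ 2 / 2 + T) := by
  have hT : 0 ≤ T := (abs_nonneg s).trans hsT
  rcases le_or_gt s 0 with hs | hs
  · rw [Ht_of_nonpos hs, abs_zero]; positivity
  rw [abs_of_pos hs] at hsT
  have hH := H_le_mul_sq hsT ha haz
  have hcoef : |z ^ 2 / (4 * s ^ 2) - 1 / (2 * s)| ≤ z ^ 2 / (4 * s ^ 2) + 1 / (2 * s) :=
    (abs_sub _ _).trans_eq (by rw [abs_of_nonneg (by positivity), abs_of_pos (by positivity)])
  calc |Ht s z| ≤ (z ^ 2 / (4 * s ^ 2) + 1 / (2 * s)) * H s z := by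
        rw [Ht, abs_mul, abs_of_nonneg (H_nonneg s z)]; gcongr; exact H_nonneg s z
    _ ≤ (z ^ 2 / (4 * s ^ 2) + 1 / (2 * s)) * (6 * √T / a ^ 3 * s ^ 2) := by gcongr
    _ = 3 * √T / a ^ 3 * (z ^ 2 / 2 + s) := by field_simp; ring
    _ ≤ 3 * √T / a ^ 3 * (z ^ 2 / 2 + T) := by gcongr

lemma hasDerivAt_H (s z : ℝ) : HasDerivAt (H s) (Hz s z) z := by
  rcases le_or_gt s 0 with hs | hs
  · rw [funext (H_of_nonpos hs), Hz_of_nonpos hs]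
    exact hasDerivAt_const z 0
  have hexponent : HasDerivAt (fun w : ℝ => -w ^ 2 / (4 * s)) (-(2 * z) / (4 * s)) z := by
    simpa using ((hasDerivAt_pow 2 z).neg).div_const (4 * s)
  refine (hexponent.exp.const_mul ((4 * π * s) ^ (-(1:ℝ) / 2))).congr_deriv ?_
  simp only [Hz, H]; field_simp; ring

lemma hasDerivAt_Hz (s z : ℝ) : HasDerivAt (Hz s) (Ht s z) z := by
  rcases le_or_gt s 0 with hs | hs
  · rw [funext (Hz_of_nonpos hs), Ht_of_nonpos hs]
    exact hasDerivAt_const z 0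
  have hcoef : HasDerivAt (fun w : ℝ => -(w / (2 * s))) (-(1 / (2 * s))) z :=
    ((hasDerivAt_id' z).div_const (2 * s)).neg
  refine (hcoef.mul (hasDerivAt_H s z)).congr_deriv ?_
  simp only [Ht, Hz]; field_simp; ring

lemma hasDerivAt_H_time_of_pos (hs : 0 < s) (z : ℝ) :
    HasDerivAt (fun r => H r z) (Ht s z) s := by
  have hpos : 0 < 4 * π * s := by positivity
  have hprefactor : HasDerivAt (fun r : ℝ => (4 * π * r) ^ (-(1:ℝ) / 2))
      (-(1:ℝ) / 2 * (4 * π * s) ^ (-(1:ℝ) / 2 - 1) * (4 * π)) s :=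
    (hasDerivAt_rpow_const (Or.inl hpos.ne')).comp s
      (((hasDerivAt_id' s).const_mul (4 * π)).congr_deriv (mul_one _))
  have hexponent : HasDerivAt (fun r : ℝ => -z ^ 2 / (4 * r)) (z ^ 2 / (4 * s ^ 2)) s := by
    have h : HasDerivAt (fun r : ℝ => -z ^ 2 / 4 * r⁻¹) (z ^ 2 / (4 * s ^ 2)) s :=
      ((hasDerivAt_inv hs.ne').const_mul _).congr_deriv (by ring)
    exact h.congr_of_eventuallyEq (Eventually.of_forall fun r => by ring)
  refine (hprefactor.mul hexponent.exp).congr_deriv ?_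
  rw [rpow_sub hpos, rpow_one]
  simp only [Ht, H]; field_simp; ring

lemma hasDerivAt_H_time_zero (hz : z ≠ 0) : HasDerivAt (fun r => H r z) 0 0 := by
  have hflat : (fun r => H r z) =O[𝓝 0] fun r => r ^ 2 := by
    refine IsBigO.of_bound (6 * √1 / (z ^ 2 / 4) ^ 3) ?_
    filter_upwards [Iio_mem_nhds one_pos] with r hr
    rw [norm_of_nonneg (H_nonneg r z), norm_of_nonneg (sq_nonneg r)]
    exact H_le_mul_sq hr.le (by positivity) le_rfl
  rw [hasDerivAt_iff_isLittleO]
  simpa [H_of_nonpos le_rfl] using hflat.trans_isLittleO (isLittleO_pow_id one_lt_two)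

lemma hasDerivAt_H_time (hz : z ≠ 0) (s : ℝ) : HasDerivAt (fun r => H r z) (Ht s z) s := by
  rcases lt_trichotomy s 0 with hs | rfl | hs
  · rw [Ht_of_nonpos hs.le]
    exact (hasDerivAt_const s 0).congr_of_eventuallyEq
      (eventually_lt_nhds hs |>.mono fun r hr => H_of_nonpos hr.le z)
  · rw [Ht_of_nonpos le_rfl]
    exact hasDerivAt_H_time_zero hz
  · exact hasDerivAt_H_time_of_pos hs z

@[fun_prop]
lemma measurable_Hz_left (z : ℝ) : Measurable fun s => Hz s z := by
  unfold Hz H; fun_prop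

@[fun_prop]
lemma measurable_Ht_left (z : ℝ) : Measurable fun s => Ht s z := by
  unfold Ht H; fun_prop

end HeatKernel

lemma abs_sub_le_of_mem_uIoc {t τ : ℝ} (hτ : τ ∈ Ι 0 t) : |t - τ| ≤ |t| := by
  simpa using abs_sub_right_of_mem_uIcc (uIoc_subset_uIcc hτ)

lemma intervalIntegrable_Hz_sub {z : ℝ} (hz : z ≠ 0) (t : ℝ) :
    IntervalIntegrable (fun τ => Hz (t - τ) z) volume 0 t :=
  intervalIntegrable_const.mono_fun' (by fun_prop : Measurable _).aestronglyMeasurable <|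
    (ae_restrict_mem measurableSet_uIoc).mono fun _ hτ =>
      abs_Hz_le (abs_sub_le_of_mem_uIoc hτ) (by positivity : 0 < z ^ 2 / 4) le_rfl

lemma intervalIntegrable_Ht_sub {z : ℝ} (hz : z ≠ 0) (t : ℝ) :
    IntervalIntegrable (fun τ => Ht (t - τ) z) volume 0 t :=
  intervalIntegrable_const.mono_fun' (by fun_prop : Measurable _).aestronglyMeasurable <|
    (ae_restrict_mem measurableSet_uIoc).mono fun _ hτ =>
      abs_Ht_le (abs_sub_le_of_mem_uIoc hτ) (by positivity : 0 < z ^ 2 / 4) le_rfl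

lemma v_eq_integral_Hz (φ : ℝ → ℝ) (t z : ℝ) :
    v φ t z = ∫ τ in (0:ℝ)..t, 2 * Hz (t - τ) z * φ τ := by
  simp only [v, fun s => (hasDerivAt_H s z).deriv]

lemma hasDerivAt_v {φ : ℝ → ℝ} (hφ : Continuous φ) (t : ℝ) {z : ℝ} (hz : z ≠ 0) :
    HasDerivAt (v φ t) (∫ τ in (0:ℝ)..t, 2 * Ht (t - τ) z * φ τ) z := by
  obtain ⟨M, hM⟩ :=
    (isCompact_uIcc (a := 0) (b := t)).exists_bound_of_continuousOn hφ.continuousOn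
  obtain ⟨C, hC⟩ : ∃ C, ∀ τ ∈ Ι 0 t, ∀ x ∈ Metric.ball z (|z| / 2), |Ht (t - τ) x| ≤ C := by
    refine ⟨3 * √|t| / (z ^ 2 / 16) ^ 3 * (9 * z ^ 2 / 8 + |t|), fun τ hτ x hx => ?_⟩
    rw [Metric.mem_ball, dist_eq_norm, norm_eq_abs] at hx
    have hlow : |z| / 2 ≤ |x| := by linarith [abs_sub_abs_le_abs_sub z x, abs_sub_comm x z]
    have hupp : |x| ≤ 3 * |z| / 2 := by linarith [abs_sub_abs_le_abs_sub x z]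
    have hsq_low : z ^ 2 / 16 ≤ x ^ 2 / 4 := by nlinarith [sq_abs x, sq_abs z, abs_nonneg z]
    have hsq_upp : x ^ 2 ≤ 9 * z ^ 2 / 4 := by nlinarith [sq_abs x, sq_abs z, abs_nonneg x]
    calc |Ht (t - τ) x| ≤ 3 * √|t| / (z ^ 2 / 16) ^ 3 * (x ^ 2 / 2 + |t|) :=
          abs_Ht_le (abs_sub_le_of_mem_uIoc hτ) (by positivity) hsq_low
      _ ≤ 3 * √|t| / (z ^ 2 / 16) ^ 3 * (9 * z ^ 2 / 8 + |t|) := by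
          gcongr _ * (?_ + _); linarith
  rw [funext (v_eq_integral_Hz φ t)]
  refine (intervalIntegral.hasDerivAt_integral_of_dominated_loc_of_deriv_le
    (bound := fun _ => 2 * C * M) (Metric.ball_mem_nhds z (half_pos (abs_pos.2 hz)))
    (Eventually.of_forall fun x => (by fun_prop : Measurable _).aestronglyMeasurable)
    (((intervalIntegrable_Hz_sub hz t).const_mul 2).mul_continuousOn hφ.continuousOn)
    (by fun_prop : Measurable _).aestronglyMeasurable
    (Eventually.of_forall fun τ hτ x hx => ?_) intervalIntegrable_const
    (Eventually.of_forall fun τ _ x _ => ((hasDerivAt_Hz _ x).const_mul 2).mul_const (φ τ))).2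
  rw [norm_mul, norm_mul, norm_eq_abs (Ht _ _), Real.norm_two]
  have hC0 : 0 ≤ C := (abs_nonneg _).trans (hC τ hτ x hx)
  gcongr
  · exact hC τ hτ x hx
  · exact hM τ (uIoc_subset_uIcc hτ)

lemma integral_Ht_sub_mul_eq {φ φ' : ℝ → ℝ} {t z : ℝ} (hz : z ≠ 0)
    (hφ : ∀ τ ∈ [[0, t]], HasDerivAt φ (φ' τ) τ) (hφ' : IntervalIntegrable φ' volume 0 t)
    (hφ0 : φ 0 = 0) :
    ∫ τ in (0:ℝ)..t, Ht (t - τ) z * φ τ = ∫ τ in (0:ℝ)..t, H (t - τ) z * φ' τ := by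
  have hw : ∀ τ ∈ [[0, t]], HasDerivAt (fun τ => -H (t - τ) z) (Ht (t - τ) z) τ := fun τ _ => by
    have h : HasDerivAt (fun τ => H (t - τ) z) (Ht (t - τ) z * -1) τ :=
      (hasDerivAt_H_time hz (t - τ)).comp τ ((hasDerivAt_id' τ).const_sub t)
    exact h.neg.congr_deriv (by ring)
  have hparts := intervalIntegral.integral_mul_deriv_eq_deriv_mul hφ hw hφ'
    (intervalIntegrable_Ht_sub hz t)
  simp_rw [mul_comm (Ht _ _), hparts, hφ0, sub_self, H_of_nonpos le_rfl]
  simp [mul_comm]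

theorem deriv_v_eq_general (φ : ℝ → ℝ) (hφ : ContDiff ℝ 1 φ) (hφ0 : φ 0 = 0)
    (t z : ℝ) (hz : z < 0) :
    deriv (fun z' => v φ t z') z = ∫ τ in (0:ℝ)..t, 2 * H (t - τ) z * deriv φ τ := by
  have hφ' : ∀ τ, HasDerivAt φ (deriv φ τ) τ := fun τ =>
    (hφ.differentiable one_ne_zero τ).hasDerivAt
  rw [(hasDerivAt_v hφ.continuous t hz.ne).deriv]
  simp_rw [mul_assoc, intervalIntegral.integral_const_mul]
  rw [integral_Ht_sub_mul_eq hz.ne (fun τ _ => hφ' τ)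
    ((hφ.continuous_deriv le_rfl).intervalIntegrable 0 t) hφ0]

theorem deriv_v_eq (φ : ℝ → ℝ) (hφ : ContDiff ℝ 1 φ) (hφ0 : φ 0 = 0)
    (t z : ℝ) (ht : 0 < t) (hz : z < 0) :
    deriv (fun z' => v φ t z') z = ∫ τ in (0:ℝ)..t, 2 * H (t - τ) z * deriv φ τ :=
  deriv_v_eq_general φ hφ hφ0 t z hz
end

section
/- Consider the dispersion relation Γ(μ,k) = (μ² + |k|²)² - μ³ = 0 (the case ε = 0). For small |k|, there is a root of the form μ = -(1/2 ± i√3/2)|k|^{4/3} + o(|k|^{4/3}) as |k| → 0; in particular, μ(k)/|k|^{4/3} → -(1/2 ± i√3/2) where -(1/2 ± i√3/2) are the two non-real cube roots of -1. -/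
/-!
Substituting `μ = k^{4/3} ν` and `s = k^{2/3}` turns `(μ² + k²)² = μ³` into
`(s ν² + 1)² = ν³`. At `s = 0` this is `ν³ = 1`, whose roots are simple, so the implicit
function theorem yields a root `ν(s) → μ₀` as `s → 0`; since `Re μ₀ < 0`, `k^{4/3} ν(k^{2/3})`
is a root in the closed left half-plane for small `k`. For the remaining `k` any root with
`Re μ ≤ 0` will do: one exists because the reciprocal polynomial `k⁴ν⁴ + 2k²ν² − ν + 1` has no
`ν³` term, so its roots sum to zero.
-/

open Filter Topology Polynomial

theorem Polynomial.exists_isRoot_re_nonpos_of_nextCoeff_eq_zero {p : ℂ[X]}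
    (hdeg : 0 < p.natDegree) (hnext : p.nextCoeff = 0) : ∃ z, p.IsRoot z ∧ z.re ≤ 0 := by
  have hsum : p.roots.sum = 0 := by
    have := (IsAlgClosed.splits p).nextCoeff_eq_neg_sum_roots_mul_leadingCoeff
    rw [hnext, eq_comm, neg_mul, neg_eq_zero, mul_eq_zero] at this
    exact this.resolve_left (leadingCoeff_ne_zero.2 (ne_zero_of_natDegree_gt hdeg))
  have hne : p.roots ≠ 0 := by
    rw [← Multiset.card_pos, IsAlgClosed.card_roots_eq_natDegree]; exact hdeg
  by_contra! hpos
  have := Multiset.sum_lt_sum_of_nonempty (f := 0) (g := Complex.re) hne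
    fun z hz => hpos z (isRoot_of_mem_roots hz)
  rw [← Complex.coe_reAddGroupHom, ← map_multiset_sum, hsum] at this
  simp at this

theorem exists_dispersion_root_re_nonpos (k : ℂ) :
    ∃ μ : ℂ, (μ ^ 2 + k ^ 2) ^ 2 = μ ^ 3 ∧ μ.re ≤ 0 := by
  rcases eq_or_ne k 0 with rfl | hk
  · exact ⟨0, by simp⟩
  set q : ℂ[X] := X ^ 4 + C (2 / k ^ 2) * X ^ 2 - C (1 / k ^ 4) * X + C (1 / k ^ 4)
  have hdeg : q.natDegree = 4 := by unfold q; compute_degree!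
  have hnext : q.nextCoeff = 0 := by
    rw [nextCoeff, hdeg]; simp [q]
  obtain ⟨ν, hν, hre⟩ := exists_isRoot_re_nonpos_of_nextCoeff_eq_zero (by omega) hnext
  have hν0 : ν ≠ 0 := by rintro rfl; simp [q, hk] at hν
  refine ⟨ν⁻¹, ?_, ?_⟩
  · simp only [q, IsRoot, eval_add, eval_sub, eval_mul, eval_pow, eval_C, eval_X] at hν
    have hrev : k ^ 4 * ν ^ 4 + 2 * k ^ 2 * ν ^ 2 - ν + 1 = 0 := by
      field_simp at hν; linear_combination hν
    field_simp
    linear_combination hrev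
  · rw [Complex.inv_re]
    exact div_nonpos_of_nonpos_of_nonneg hre (Complex.normSq_nonneg ν)

theorem exists_tendsto_eventually_apply_eq_of_deriv_ne_zero {𝕜 : Type*} [RCLike 𝕜]
    {f : 𝕜 × 𝕜 → 𝕜} {u : 𝕜 × 𝕜} (hf : ContDiffAt 𝕜 1 f u)
    (hf₂ : deriv (fun y => f (u.1, y)) u.2 ≠ 0) :
    ∃ ψ : 𝕜 → 𝕜, Tendsto ψ (𝓝 u.1) (𝓝 u.2) ∧ ∀ᶠ x in 𝓝 u.1, f (x, ψ x) = f u := by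
  have hstrict := hf.hasStrictFDerivAt one_ne_zero
  have hpartial : (fderiv 𝕜 f u ∘L .inr 𝕜 𝕜 𝕜) 1 = deriv (fun y => f (u.1, y)) u.2 :=
    (((hf.differentiableAt one_ne_zero).hasFDerivAt.comp_hasDerivAt u.2
      ((hasDerivAt_const u.2 u.1).prodMk (hasDerivAt_id u.2))).deriv).symm
  have hinv : (fderiv 𝕜 f u ∘L .inr 𝕜 𝕜 𝕜).IsInvertible :=
    ⟨ContinuousLinearEquiv.unitsEquivAut 𝕜 (Units.mk0 _ hf₂),
      ContinuousLinearMap.ext_ring (by simp [hpartial])⟩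
  exact ⟨_, hstrict.tendsto_implicitFunctionOfProdDomain hinv,
    hstrict.eventually_apply_implicitFunctionOfProdDomain hinv⟩

theorem exists_tendsto_rescaled_dispersion_root {μ₀ : ℂ} (h3 : μ₀ ^ 3 = 1) :
    ∃ ψ : ℂ → ℂ, Tendsto ψ (𝓝 0) (𝓝 μ₀) ∧ ∀ᶠ s in 𝓝 0, (s * ψ s ^ 2 + 1) ^ 2 = ψ s ^ 3 := by
  have hμ₀ : μ₀ ≠ 0 := by rintro rfl; norm_num at h3
  have hderiv : deriv (fun ν : ℂ => (0 * ν ^ 2 + 1) ^ 2 - ν ^ 3) μ₀ = -(3 * μ₀ ^ 2) := by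
    simp
  obtain ⟨ψ, hψ, hroot⟩ := exists_tendsto_eventually_apply_eq_of_deriv_ne_zero
    (f := fun p : ℂ × ℂ => (p.1 * p.2 ^ 2 + 1) ^ 2 - p.2 ^ 3) (u := (0, μ₀)) (by fun_prop)
    (by simpa [hderiv] using hμ₀)
  refine ⟨ψ, hψ, hroot.mono fun s hs => ?_⟩
  simp only [h3] at hs
  linear_combination hs

theorem dispersion_eq_of_rescaled_eq {k : ℝ} (hk : 0 ≤ k) {ν : ℂ}
    (h : (((k ^ ((2 : ℝ) / 3) : ℝ) : ℂ) * ν ^ 2 + 1) ^ 2 = ν ^ 3) :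
    ((((k ^ ((4 : ℝ) / 3) : ℝ) : ℂ) * ν) ^ 2 + (k : ℂ) ^ 2) ^ 2
      = (((k ^ ((4 : ℝ) / 3) : ℝ) : ℂ) * ν) ^ 3 := by
  have hsq : (k ^ ((4 : ℝ) / 3)) ^ 2 = k ^ 2 * k ^ ((2 : ℝ) / 3) := by
    rw [← Real.rpow_natCast, ← Real.rpow_mul hk, ← Real.rpow_natCast k 2,
      ← Real.rpow_add' hk (by norm_num)]
    norm_num
  have hcube : (k ^ ((4 : ℝ) / 3)) ^ 3 = k ^ 4 := by
    rw [← Real.rpow_natCast, ← Real.rpow_mul hk]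
    norm_num
  set a := k ^ ((4 : ℝ) / 3)
  set b := k ^ ((2 : ℝ) / 3)
  have hsq' : (a : ℂ) ^ 2 = (k : ℂ) ^ 2 * b := by exact_mod_cast hsq
  have hcube' : (a : ℂ) ^ 3 = (k : ℂ) ^ 4 := by exact_mod_cast hcube
  linear_combination (k : ℂ) ^ 4 * h - ν ^ 3 * hcube'
    + ν ^ 2 * ((a : ℂ) ^ 2 * ν ^ 2 + k ^ 2 * b * ν ^ 2 + 2 * k ^ 2) * hsq'

theorem exists_dispersion_branch {μ₀ : ℂ} (h3 : μ₀ ^ 3 = 1) (hre : μ₀.re < 0) :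
    ∃ μ : ℝ → ℂ,
      (∀ k : ℝ, 0 < k → ((μ k) ^ 2 + (k : ℂ) ^ 2) ^ 2 = (μ k) ^ 3 ∧ (μ k).re ≤ 0) ∧
      Tendsto (fun k : ℝ => μ k / ((k ^ ((4 : ℝ) / 3) : ℝ) : ℂ)) (𝓝[>] 0) (𝓝 μ₀) := by
  classical
  obtain ⟨ψ, hψ, hroot⟩ := exists_tendsto_rescaled_dispersion_root h3
  set s : ℝ → ℂ := fun k => ((k ^ ((2 : ℝ) / 3) : ℝ) : ℂ)
  have hs : Tendsto s (𝓝[>] 0) (𝓝 0) := by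
    have hrpow : Tendsto (fun k : ℝ => k ^ ((2 : ℝ) / 3)) (𝓝[>] 0) (𝓝 0) :=
      ((Real.continuous_rpow_const (by norm_num)).tendsto' 0 0
        (Real.zero_rpow (by norm_num))).mono_left nhdsWithin_le_nhds
    exact (Complex.continuous_ofReal.tendsto' 0 0 Complex.ofReal_zero).comp hrpow
  have hψs : Tendsto (ψ ∘ s) (𝓝[>] 0) (𝓝 μ₀) := hψ.comp hs
  set P : ℝ → Prop := fun k => (s k * ψ (s k) ^ 2 + 1) ^ 2 = ψ (s k) ^ 3 ∧ (ψ (s k)).re ≤ 0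
  have hP : ∀ᶠ k in 𝓝[>] 0, P k :=
    (hs.eventually hroot).and
      (((Complex.continuous_re.tendsto μ₀).comp hψs).eventually (gt_mem_nhds hre) |>.mono
        fun _ h => h.le)
  choose anyRoot hanyRoot using fun k : ℝ => exists_dispersion_root_re_nonpos k
  refine ⟨fun k => if P k then ((k ^ ((4 : ℝ) / 3) : ℝ) : ℂ) * ψ (s k) else anyRoot k,
    fun k hk => ?_, ?_⟩
  · beta_reduce
    split_ifs with hPk
    · refine ⟨dispersion_eq_of_rescaled_eq hk.le hPk.1, ?_⟩
      rw [Complex.re_ofReal_mul]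
      exact mul_nonpos_of_nonneg_of_nonpos (by positivity) hPk.2
    · exact hanyRoot k
  · refine hψs.congr' ?_
    filter_upwards [hP, self_mem_nhdsWithin] with k hPk hk
    have hscale : ((k ^ ((4 : ℝ) / 3) : ℝ) : ℂ) ≠ 0 := by
      exact_mod_cast (Real.rpow_pos_of_pos hk _).ne'
    simp only [Function.comp_apply, if_pos hPk, mul_div_cancel_left₀ _ hscale]

theorem Complex.mk_neg_half_pow_three {c : ℝ} (hc : c ^ 2 = 3) :
    (⟨-1 / 2, c / 2⟩ : ℂ) ^ 3 = 1 := by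
  apply Complex.ext
  · simp [pow_succ]
    linear_combination (3 / 8) * hc
  · simp [pow_succ]
    linear_combination (-c / 8) * hc

theorem dispersion_longwave_root :
    ∀ μ₀ ∈ ({Complex.mk (-1/2) (Real.sqrt 3 / 2),
             Complex.mk (-1/2) (-(Real.sqrt 3 / 2))} : Set ℂ),
      μ₀ ^ 3 = 1 ∧ μ₀.re < 0 ∧
      ∃ μ : ℝ → ℂ,
        (∀ k : ℝ, 0 < k → ((μ k) ^ 2 + (k:ℂ) ^ 2) ^ 2 = (μ k) ^ 3 ∧ (μ k).re ≤ 0) ∧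
        Filter.Tendsto (fun k : ℝ => μ k / ((k ^ ((4:ℝ)/3) : ℝ) : ℂ))
          (nhdsWithin 0 (Set.Ioi 0)) (nhds μ₀) := by
  intro μ₀ hμ₀
  have h3 : μ₀ ^ 3 = 1 := by
    rcases hμ₀ with rfl | rfl
    · exact Complex.mk_neg_half_pow_three (by simp)
    · rw [← neg_div]; exact Complex.mk_neg_half_pow_three (by simp)
  have hre : μ₀.re < 0 := by rcases hμ₀ with rfl | rfl <;> norm_num
  exact ⟨h3, hre, exists_dispersion_branch h3 hre⟩
end
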